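/- Let A be an admissible domain. Then there exists a constant C > 0 depending only on d_A such that for all N ∈ ℕ, | N ∫_A S_N(√N z, √N z) dz − (N/π)·area(A) + (1/(4π)) ∫_A Im(z)^{−2} dz | ≤ C/N, where area denotes two-dimensional Lebesgue measure and the integrals are with respect to Lebesgue measure on ℂ. (Note S_N(√N z, √N z) is real for nonreal z.) -/

import Mathlib

open MeasureTheory ProbabilityTheory Filter Topology ComplexConjugate

noncomputable section

/-- The open upper half of the unit disk `𝔻⁺`. -/
def upperHalfDisk : Set ℂ := {z : ℂ | norm z < 1 ∧ 0 < z.im}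

/-- A (plane) domain: a nonempty connected open subset of `ℂ`. -/
def IsPlaneDomain (A : Set ℂ) : Prop := IsOpen A ∧ IsConnected A

/-- A domain is admissible if its closure is contained in the upper half disk. -/
def IsAdmissible (A : Set ℂ) : Prop := closure A ⊆ upperHalfDisk

/-- `d_A`: the distance between `A` and the boundary of the upper half disk. -/
def dA (A : Set ℂ) : ℝ :=
  sInf {r : ℝ | ∃ z ∈ A, ∃ w ∈ frontier upperHalfDisk, r = dist z w}

/-- Lipschitz domain: near every boundary point, after a rigid motion of the plane,
the set coincides with the subgraph of a Lipschitz function. -/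
def IsLipschitzDomain (A : Set ℂ) : Prop :=
  ∀ x ∈ frontier A, ∃ (φ : ℂ ≃ᵃⁱ[ℝ] ℂ) (K : NNReal) (f : ℝ → ℝ) (ε : ℝ),
    0 < ε ∧ LipschitzWith K f ∧
      ∀ y ∈ Metric.ball x ε, (y ∈ A ↔ (φ y).im < f ((φ y).re))

/-- `ℓ(∂A)`: the one-dimensional Hausdorff measure of the boundary of `A`. -/
def boundaryLength (A : Set ℂ) : ℝ :=
  ((MeasureTheory.Measure.hausdorffMeasure 1 : Measure ℂ) (frontier A)).toReal

/-- The law of the `N × N` real Ginibre matrix: i.i.d. standard Gaussian entries,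
realized on the canonical product space. -/
def ginibreMeasure (N : ℕ) : Measure ((Fin N × Fin N) → ℝ) :=
  Measure.pi fun _ => gaussianReal 0 1

/-- The real Ginibre matrix `G_N` as a function of the sample point. -/
def ginibreMatrix (N : ℕ) (ω : (Fin N × Fin N) → ℝ) : Matrix (Fin N) (Fin N) ℝ :=
  Matrix.of fun i j => ω (i, j)

/-- `W_N = N^{-1/2} G_N`. -/
def Wmatrix (N : ℕ) (ω : (Fin N × Fin N) → ℝ) : Matrix (Fin N) (Fin N) ℝ :=
  (Real.sqrt N)⁻¹ • ginibreMatrix N ω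

/-- The eigenvalues (with multiplicity) of a real matrix: the multiset of complex
roots of its characteristic polynomial. -/
def eigs {N : ℕ} (M : Matrix (Fin N) (Fin N) ℝ) : Multiset ℂ :=
  (Matrix.charpoly (M.map fun x => (x : ℂ))).roots

/-- The number of eigenvalues of `M` lying in `A`, with multiplicity. -/
def countIn (A : Set ℂ) {N : ℕ} (M : Matrix (Fin N) (Fin N) ℝ) : ℕ :=
  letI := Classical.decPred fun z : ℂ => z ∈ A
  Multiset.countP (fun z => z ∈ A) (eigs M)

/-- The centered eigenvalue counting statistic `X_A` of `W_N`. -/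
def XA (A : Set ℂ) (N : ℕ) (ω : (Fin N × Fin N) → ℝ) : ℝ :=
  (countIn A (Wmatrix N ω) : ℝ) -
    ∫ ω', (countIn A (Wmatrix N ω') : ℝ) ∂(ginibreMeasure N)

/-- `s_N(z) = e^{-z} ∑_{j<N} z^j/j!`. -/
def sN (N : ℕ) (z : ℂ) : ℂ :=
  Complex.exp (-z) * ∑ j ∈ Finset.range N, z ^ j / (Nat.factorial j : ℂ)

/-- The complementary error function. -/
def erfc (x : ℝ) : ℝ := (2 / Real.sqrt Real.pi) * ∫ t in Set.Ioi x, Real.exp (-t ^ 2)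

/-- `G(z,w) = √(erfc(√2 Im z) erfc(√2 Im w))`. -/
def Gker (z w : ℂ) : ℝ :=
  Real.sqrt (erfc (Real.sqrt 2 * z.im) * erfc (Real.sqrt 2 * w.im))

/-- The kernel `S_N`. -/
def SN (N : ℕ) (z w : ℂ) : ℂ :=
  Complex.I * Complex.exp (-(1 / 2 : ℂ) * (z - conj w) ^ 2) / (Real.sqrt (2 * Real.pi) : ℂ) *
    (conj w - z) * (Gker z w : ℂ) * sN N (z * conj w)

/-- The kernel `D_N`. -/
def DN (N : ℕ) (z w : ℂ) : ℂ :=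
  Complex.exp (-(1 / 2 : ℂ) * (z - w) ^ 2) / (Real.sqrt (2 * Real.pi) : ℂ) *
    (w - z) * (Gker z w : ℂ) * sN N (z * w)

/-- The kernel `I_N`. -/
def IN (N : ℕ) (z w : ℂ) : ℂ :=
  Complex.exp (-(1 / 2 : ℂ) * (conj z - conj w) ^ 2) / (Real.sqrt (2 * Real.pi) : ℂ) *
    (conj z - conj w) * (Gker z w : ℂ) * sN N (conj z * conj w)

/-- The Pfaffian of a `2n × 2n` complex matrix, via the sum over permutations. -/
def Pf {n : ℕ} (M : Matrix (Fin (2 * n)) (Fin (2 * n)) ℂ) : ℂ :=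
  (1 / (2 ^ n * (Nat.factorial n : ℂ))) *
    ∑ σ : Equiv.Perm (Fin (2 * n)),
      ((Equiv.Perm.sign σ : ℤ) : ℂ) *
        ∏ i : Fin n,
          M (σ ⟨2 * i.val, by have := i.isLt; omega⟩)
            (σ ⟨2 * i.val + 1, by have := i.isLt; omega⟩)

/-- The `2 × 2` matrix kernel `K(z,w)`. -/
def Kmat (N : ℕ) (z w : ℂ) : Matrix (Fin 2) (Fin 2) ℂ :=
  !![DN N z w, SN N z w; -(SN N w z), IN N z w]

/-- The `2k × 2k` matrix assembled from the `2 × 2` blocks `K(z_i, z_j)`. -/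
def blockK (N k : ℕ) (z : Fin k → ℂ) : Matrix (Fin (2 * k)) (Fin (2 * k)) ℂ :=
  Matrix.of fun p q =>
    Kmat N (z ⟨p.val / 2, by have := p.isLt; omega⟩) (z ⟨q.val / 2, by have := q.isLt; omega⟩)
      ⟨p.val % 2, Nat.mod_lt _ (by omega)⟩ ⟨q.val % 2, Nat.mod_lt _ (by omega)⟩

/-- Cyclic successor on `Fin k` (so that `z_{k+1} = z_1`). -/
def cnext {k : ℕ} (i : Fin k) : Fin k := ⟨(i.val + 1) % k, Nat.mod_lt _ i.pos⟩

/-- `g(z,w) = Re(z) Im(w) - Re(w) Im(z)`. -/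
def gfun (z w : ℂ) : ℝ := z.re * w.im - w.re * z.im

/-- The cyclic exponent `-(N/2) ∑ |z_i - z_{i+1}|² + iN ∑ g(z_i, z_{i+1})`. -/
def cycExp (N k : ℕ) (z : Fin k → ℂ) : ℂ :=
  (Complex.ofReal (-((N : ℝ) / 2) * ∑ i : Fin k, norm (z i - z (cnext i)) ^ 2)) +
    Complex.I * (N : ℂ) * Complex.ofReal (∑ i : Fin k, gfun (z i) (z (cnext i)))

/-- `R_k = N^k ∫_{A^k} ∏_{i=1}^k S_N(√N z_i, √N z_{i+1}) dz`, with `z_{k+1} = z_1`. -/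
def Rk (N k : ℕ) (A : Set ℂ) : ℂ :=
  (N : ℂ) ^ k *
    ∫ z : Fin k → ℂ in Set.univ.pi fun _ => A,
      ∏ i : Fin k, SN N ((Real.sqrt N : ℂ) * z i) ((Real.sqrt N : ℂ) * z (cnext i))
      ∂(Measure.pi fun _ => volume)

/-- The sum of `f` over `k`-tuples of pairwise distinct indices of a multiset. -/
def tupleSum (k : ℕ) (s : Multiset ℂ) (f : (Fin k → ℂ) → ℝ) : ℝ :=
  ∑ t : Fin k ↪ Fin s.toList.length, f fun i => s.toList.get (t i)


set_option maxHeartbeats 1600000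

namespace Stmt11Aux

open Real Set Metric

lemma gauss_integrableOn (a : ℝ) : IntegrableOn (fun s : ℝ => Real.exp (-s ^ 2)) (Ioi a) := by
  have h : (fun s : ℝ => Real.exp (-s ^ 2)) = fun s => Real.exp (-(1 : ℝ) * s ^ 2) := by
    funext s; ring_nf
  rw [h]; exact (integrable_exp_neg_mul_sq one_pos).integrableOn

lemma erfc_nonneg (x : ℝ) : 0 ≤ erfc x := by
  apply mul_nonneg (by positivity)
  exact setIntegral_nonneg measurableSet_Ioi fun t _ => (Real.exp_nonneg _)

lemma erfc_measurable : Measurable erfc := by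
  have h : Antitone fun x : ℝ => ∫ t in Ioi x, Real.exp (-t ^ 2) := by
    intro a b hab
    exact setIntegral_mono_set (gauss_integrableOn a)
      (Filter.Eventually.of_forall fun t => Real.exp_nonneg _)
      (HasSubset.Subset.eventuallyLE (Ioi_subset_Ioi hab))
  exact (h.measurable).const_mul _

lemma aux_integrable {a : ℝ} (ha : 0 < a) (k : ℕ) :
    IntegrableOn (fun s : ℝ => Real.exp (-s ^ 2) / s ^ k) (Ioi a) := by
  apply Integrable.mono' (((gauss_integrableOn a).mul_const ((a ^ k)⁻¹)))
  · exact ((Real.measurable_exp.comp ((measurable_id.pow_const 2).neg)).div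
      (measurable_id.pow_const k)).aestronglyMeasurable
  · filter_upwards [ae_restrict_mem measurableSet_Ioi] with s hs
    have hs' : a < s := hs
    have h1 : (0:ℝ) < s ^ k := pow_pos (ha.trans hs') k
    rw [Real.norm_eq_abs, abs_of_nonneg (by positivity)]
    rw [div_eq_mul_inv]
    gcongr



lemma exp_deriv_aux (s : ℝ) : HasDerivAt (fun u : ℝ => Real.exp (-u ^ 2))
    (Real.exp (-s ^ 2) * (-(2 * s))) s := by
  have h1 : HasDerivAt (fun u : ℝ => -u ^ 2) (-(2 * s)) s := by
    simpa using ((hasDerivAt_pow 2 s).fun_neg)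
  exact h1.exp

lemma gauss_tendsto : Tendsto (fun s : ℝ => Real.exp (-s ^ 2)) atTop (𝓝 0) := by
  apply Real.tendsto_exp_atBot.comp
  simpa using (tendsto_pow_atTop (n := 2) (by norm_num)).neg_const_mul_atTop
    (r := (-1 : ℝ)) (by norm_num)

lemma tendsto_aux (c : ℝ) (hc : 0 < c) (k : ℕ) (hk : k ≠ 0) :
    Tendsto (fun s : ℝ => -Real.exp (-s ^ 2) / (c * s ^ k)) atTop (𝓝 0) := by
  apply Tendsto.div_atTop (f := fun s : ℝ => -Real.exp (-s ^ 2)) (l := atTop)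
  · simpa using gauss_tendsto.neg
  · exact Tendsto.const_mul_atTop hc (tendsto_pow_atTop hk)

lemma ibp1 {t : ℝ} (ht : 0 < t) :
    (∫ s in Ioi t, Real.exp (-s ^ 2)) + (1 / 2) * ∫ s in Ioi t, Real.exp (-s ^ 2) / s ^ 2
      = Real.exp (-t ^ 2) / (2 * t) := by
  have key : ∫ s in Ioi t, (Real.exp (-s ^ 2) + (1/2) * (Real.exp (-s ^ 2) / s ^ 2))
      = 0 - (-Real.exp (-t ^ 2) / (2 * t)) := by
    apply integral_Ioi_of_hasDerivAt_of_tendsto' (f := fun s => -Real.exp (-s ^ 2) / (2 * s))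
    · intro s hs
      have hs0 : s ≠ 0 := (lt_of_lt_of_le ht hs).ne'
      have hu : HasDerivAt (fun u : ℝ => -Real.exp (-u ^ 2)) (2 * s * Real.exp (-s ^ 2)) s := by
        have := (exp_deriv_aux s).fun_neg; refine this.congr_deriv ?_; ring
      have hv : HasDerivAt (fun u : ℝ => 2 * u) 2 s := by
        simpa using (hasDerivAt_id s).const_mul 2
      have := hu.fun_div hv (by simpa using hs0)
      refine this.congr_deriv ?_
      field_simp
      ring
    · exact ((gauss_integrableOn t).add (((aux_integrable ht 2)).const_mul (1/2)))
    · have := tendsto_aux 2 (by norm_num) 1 (by norm_num)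
      simpa using this
  rw [integral_add (gauss_integrableOn t) ((aux_integrable ht 2).const_mul (1/2)),
    integral_const_mul] at key
  rw [key]; ring

lemma ibp2 {t : ℝ} (ht : 0 < t) :
    (∫ s in Ioi t, Real.exp (-s ^ 2) / s ^ 2)
        + (3 / 2) * ∫ s in Ioi t, Real.exp (-s ^ 2) / s ^ 4
      = Real.exp (-t ^ 2) / (2 * t ^ 3) := by
  have key : ∫ s in Ioi t, (Real.exp (-s ^ 2) / s ^ 2 + (3/2) * (Real.exp (-s ^ 2) / s ^ 4))
      = 0 - (-Real.exp (-t ^ 2) / (2 * t ^ 3)) := by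
    apply integral_Ioi_of_hasDerivAt_of_tendsto' (f := fun s => -Real.exp (-s ^ 2) / (2 * s ^ 3))
    · intro s hs
      have hs0 : s ≠ 0 := (lt_of_lt_of_le ht hs).ne'
      have hu : HasDerivAt (fun u : ℝ => -Real.exp (-u ^ 2)) (2 * s * Real.exp (-s ^ 2)) s := by
        have := (exp_deriv_aux s).fun_neg; refine this.congr_deriv ?_; ring
      have hv : HasDerivAt (fun u : ℝ => 2 * u ^ 3) (2 * (3 * s ^ 2)) s := by
        simpa using (hasDerivAt_pow 3 s).const_mul 2
      have := hu.fun_div hv (by positivity)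
      refine this.congr_deriv ?_
      field_simp
      ring
    · exact ((aux_integrable ht 2).add (((aux_integrable ht 4)).const_mul (3/2)))
    · have := tendsto_aux 2 (by norm_num) 3 (by norm_num)
      simpa using this
  rw [integral_add (aux_integrable ht 2) ((aux_integrable ht 4).const_mul (3/2)),
    integral_const_mul] at key
  rw [key]; ring


lemma intpow_nonneg {t : ℝ} (ht : 0 ≤ t) (k : ℕ) :
    0 ≤ ∫ s in Ioi t, Real.exp (-s ^ 2) / s ^ k :=
  setIntegral_nonneg measurableSet_Ioi fun s hs =>
    div_nonneg (Real.exp_nonneg _) (pow_nonneg (ht.trans (le_of_lt hs)) k)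

lemma gauss_upper {t : ℝ} (ht : 0 < t) :
    ∫ s in Ioi t, Real.exp (-s ^ 2) ≤ Real.exp (-t ^ 2) / (2 * t) := by
  have h := ibp1 ht
  nlinarith [intpow_nonneg ht.le 2]

lemma int4_upper {t : ℝ} (ht : 0 < t) :
    ∫ s in Ioi t, Real.exp (-s ^ 2) / s ^ 4 ≤ Real.exp (-t ^ 2) / (2 * t ^ 5) := by
  have h1 : ∫ s in Ioi t, Real.exp (-s ^ 2) / s ^ 4
      ≤ ∫ s in Ioi t, Real.exp (-s ^ 2) * (t ^ 4)⁻¹ := by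
    apply setIntegral_mono_on (aux_integrable ht 4) ((gauss_integrableOn t).mul_const _)
      measurableSet_Ioi
    intro s hs
    rw [div_eq_mul_inv]
    exact mul_le_mul_of_nonneg_left
      (inv_anti₀ (pow_pos ht 4) (pow_le_pow_left₀ ht.le (le_of_lt hs) 4))
      (Real.exp_nonneg _)
  rw [integral_mul_const] at h1
  calc ∫ s in Ioi t, Real.exp (-s ^ 2) / s ^ 4
      ≤ (∫ s in Ioi t, Real.exp (-s ^ 2)) * (t ^ 4)⁻¹ := h1
    _ ≤ (Real.exp (-t ^ 2) / (2 * t)) * (t ^ 4)⁻¹ :=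
        mul_le_mul_of_nonneg_right (gauss_upper ht) (by positivity)
    _ = Real.exp (-t ^ 2) / (2 * t ^ 5) := by
        field_simp

lemma key_gauss {t : ℝ} (ht : 0 < t) :
    |(∫ s in Ioi t, Real.exp (-s ^ 2))
        - Real.exp (-t ^ 2) / (2 * t) + Real.exp (-t ^ 2) / (4 * t ^ 3)|
      ≤ (3 / 8) * Real.exp (-t ^ 2) / t ^ 5 := by
  have hd : Real.exp (-t ^ 2) / (4 * t ^ 3) = (1/2) * (Real.exp (-t ^ 2) / (2 * t ^ 3)) := by
    ring
  have hEq : (∫ s in Ioi t, Real.exp (-s ^ 2))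
        - Real.exp (-t ^ 2) / (2 * t) + Real.exp (-t ^ 2) / (4 * t ^ 3)
      = (3 / 4) * ∫ s in Ioi t, Real.exp (-s ^ 2) / s ^ 4 := by
    linarith [ibp1 ht, ibp2 ht, hd]
  rw [hEq, abs_of_nonneg (mul_nonneg (by norm_num) (intpow_nonneg ht.le 4))]
  calc (3 / 4) * ∫ s in Ioi t, Real.exp (-s ^ 2) / s ^ 4
      ≤ (3 / 4) * (Real.exp (-t ^ 2) / (2 * t ^ 5)) :=
        mul_le_mul_of_nonneg_left (int4_upper ht) (by norm_num)
    _ = (3 / 8) * Real.exp (-t ^ 2) / t ^ 5 := by ring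

/-- `E t = √π t e^{t²} erfc t` -/
def Efun (t : ℝ) : ℝ := Real.sqrt Real.pi * t * Real.exp (t ^ 2) * erfc t

lemma Efun_eq (t : ℝ) :
    Efun t = 2 * t * Real.exp (t ^ 2) * ∫ s in Ioi t, Real.exp (-s ^ 2) := by
  rw [Efun, erfc]
  have h : Real.sqrt Real.pi ≠ 0 := by positivity
  field_simp
  try ring

lemma Efun_nonneg {t : ℝ} (ht : 0 ≤ t) : 0 ≤ Efun t := by
  rw [Efun_eq]
  have := setIntegral_nonneg (μ := volume) (s := Ioi t)
    measurableSet_Ioi fun s _ => Real.exp_nonneg (-s ^ 2)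
  positivity

lemma Efun_le_one {t : ℝ} (ht : 0 < t) : Efun t ≤ 1 := by
  rw [Efun_eq]
  have h := mul_le_mul_of_nonneg_left (gauss_upper ht)
    (show (0:ℝ) ≤ 2 * t * Real.exp (t ^ 2) by positivity)
  refine le_trans h ?_
  rw [Real.exp_neg]
  rw [show (2 * t * Real.exp (t ^ 2) * ((Real.exp (t ^ 2))⁻¹ / (2 * t))) = 1 by
    field_simp]
  
lemma Efun_expansion {t : ℝ} (ht : 0 < t) :
    |Efun t - 1 + 1 / (2 * t ^ 2)| ≤ (3 / 4) / t ^ 4 := by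
  have hk := key_gauss ht
  have key : Efun t - 1 + 1 / (2 * t ^ 2)
      = 2 * t * Real.exp (t ^ 2) * ((∫ s in Ioi t, Real.exp (-s ^ 2))
        - Real.exp (-t ^ 2) / (2 * t) + Real.exp (-t ^ 2) / (4 * t ^ 3)) := by
    rw [Efun_eq, Real.exp_neg]
    field_simp
    ring
  rw [key, abs_mul]
  rw [show |2 * t * Real.exp (t ^ 2)| = 2 * t * Real.exp (t ^ 2) from
    abs_of_nonneg (by positivity)]
  have step := mul_le_mul_of_nonneg_left hk
    (show (0:ℝ) ≤ 2 * t * Real.exp (t ^ 2) by positivity)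
  refine le_trans step (le_of_eq ?_)
  rw [Real.exp_neg]
  field_simp
  ring

def sr (N : ℕ) (x : ℝ) : ℝ :=
  Real.exp (-x) * ∑ j ∈ Finset.range N, x ^ j / (Nat.factorial j : ℝ)

lemma sr_nonneg (N : ℕ) {x : ℝ} (hx : 0 ≤ x) : 0 ≤ sr N x :=
  mul_nonneg (Real.exp_nonneg _) (Finset.sum_nonneg fun j _ =>
    div_nonneg (pow_nonneg hx _) (Nat.cast_nonneg _))

lemma sr_le_one (N : ℕ) {x : ℝ} (hx : 0 ≤ x) : sr N x ≤ 1 := by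
  have h := Real.sum_le_exp_of_nonneg hx N
  calc sr N x ≤ Real.exp (-x) * Real.exp x :=
        mul_le_mul_of_nonneg_left h (Real.exp_nonneg _)
    _ = 1 := by rw [← Real.exp_add]; simp

lemma exp_eq_tsum (x : ℝ) : Real.exp x = ∑' j : ℕ, x ^ j / (Nat.factorial j : ℝ) := by
  rw [Real.exp_eq_exp_ℝ, NormedSpace.exp_eq_tsum_div]

lemma summable_pow_div (x : ℝ) : Summable (fun j : ℕ => x ^ j / (Nat.factorial j : ℝ)) := by
  simpa [div_eq_mul_inv] using Real.summable_pow_div_factorial x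

lemma sr_tail {N : ℕ} (hN : 1 ≤ N) {r : ℝ} (hr0 : 0 < r) (hr1 : r < 1) :
    1 - sr N ((N : ℝ) * r) ≤ (r * Real.exp (1 - r)) ^ N / (1 - r) := by
  set x : ℝ := (N : ℝ) * r with hxdef
  have hx : 0 ≤ x := mul_nonneg (Nat.cast_nonneg _) hr0.le
  have hNpos : (0:ℝ) < N := by exact_mod_cast hN
  -- tail representation
  have htail : Real.exp x - ∑ j ∈ Finset.range N, x ^ j / (Nat.factorial j : ℝ)
      = ∑' j : ℕ, x ^ (j + N) / (Nat.factorial (j + N) : ℝ) := by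
    have h := Summable.sum_add_tsum_nat_add (f := fun j : ℕ => x ^ j / (Nat.factorial j : ℝ)) N
      (summable_pow_div x)
    rw [exp_eq_tsum]
    linarith [h]
  -- term bound
  have hterm : ∀ j : ℕ, x ^ (j + N) / (Nat.factorial (j + N) : ℝ)
      ≤ (x ^ N / (Nat.factorial N : ℝ)) * r ^ j := by
    intro j
    have hfac : (Nat.factorial N : ℝ) * (N : ℝ) ^ j ≤ (Nat.factorial (j + N) : ℝ) := by
      have h1 : Nat.factorial N * N ^ j ≤ Nat.factorial (N + j) := by
        calc Nat.factorial N * N ^ j ≤ Nat.factorial N * (N + 1) ^ j := by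
              gcongr; omega
          _ ≤ Nat.factorial (N + j) := Nat.factorial_mul_pow_le_factorial
      rw [Nat.add_comm j N]
      exact_mod_cast h1
    have hx' : x ^ (j + N) = x ^ N * x ^ j := by rw [pow_add]; ring
    have hxj : x ^ j = (N:ℝ) ^ j * r ^ j := by
      rw [hxdef, mul_pow]
    rw [hx', hxj]
    rw [div_le_iff₀ (by positivity)]
    have hNf : (0:ℝ) < (Nat.factorial N : ℝ) := by exact_mod_cast Nat.factorial_pos N
    calc x ^ N * ((N:ℝ) ^ j * r ^ j) = (x ^ N * r ^ j) * ((N:ℝ) ^ j) := by ring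
      _ ≤ x ^ N / (Nat.factorial N : ℝ) * r ^ j * (Nat.factorial (j + N):ℝ) := by
          rw [div_mul_eq_mul_div, div_mul_eq_mul_div, le_div_iff₀ hNf]
          calc x ^ N * r ^ j * (N:ℝ) ^ j * (Nat.factorial N : ℝ)
              = (x ^ N * r ^ j) * ((Nat.factorial N : ℝ) * (N:ℝ) ^ j) := by ring
            _ ≤ (x ^ N * r ^ j) * (Nat.factorial (j + N) : ℝ) := by
                apply mul_le_mul_of_nonneg_left hfac (by positivity)
            _ = x ^ N * r ^ j * (Nat.factorial (j+N) : ℝ) := by ring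
  -- sum the geometric series
  have hgeom : Summable (fun j : ℕ => (x ^ N / (Nat.factorial N : ℝ)) * r ^ j) :=
    (summable_geometric_of_lt_one hr0.le hr1).mul_left _
  have hsum_tail : Summable (fun j : ℕ => x ^ (j + N) / (Nat.factorial (j + N) : ℝ)) :=
    (summable_pow_div x).comp_injective (add_left_injective N)
  have htsum_le : (∑' j : ℕ, x ^ (j + N) / (Nat.factorial (j + N) : ℝ))
      ≤ (x ^ N / (Nat.factorial N : ℝ)) * (1 - r)⁻¹ := by
    calc (∑' j : ℕ, x ^ (j + N) / (Nat.factorial (j + N) : ℝ))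
        ≤ ∑' j : ℕ, (x ^ N / (Nat.factorial N : ℝ)) * r ^ j :=
          Summable.tsum_le_tsum hterm hsum_tail hgeom
      _ = (x ^ N / (Nat.factorial N : ℝ)) * ∑' j : ℕ, r ^ j := tsum_mul_left
      _ = (x ^ N / (Nat.factorial N : ℝ)) * (1 - r)⁻¹ := by
          rw [tsum_geometric_of_lt_one hr0.le hr1]
  -- N^N/N! ≤ e^N
  have hfacN : (N : ℝ) ^ N / (Nat.factorial N : ℝ) ≤ Real.exp N := by
    calc (N : ℝ) ^ N / (Nat.factorial N : ℝ)
        ≤ ∑ i ∈ Finset.range (N + 1), (N : ℝ) ^ i / (Nat.factorial i : ℝ) := by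
          apply Finset.single_le_sum (f := fun i => (N:ℝ) ^ i / (Nat.factorial i : ℝ))
            (fun i _ => div_nonneg (pow_nonneg (Nat.cast_nonneg N) i) (Nat.cast_nonneg _))
          exact Finset.self_mem_range_succ N
      _ ≤ Real.exp N := Real.sum_le_exp_of_nonneg (Nat.cast_nonneg N) (N + 1)
  -- put it together
  have h1 : 1 - sr N x = Real.exp (-x) *
      (Real.exp x - ∑ j ∈ Finset.range N, x ^ j / (Nat.factorial j : ℝ)) := by
    rw [sr, mul_sub, ← Real.exp_add]
    simp
  rw [h1, htail]
  have hexpx : Real.exp (-x) * (x ^ N / (Nat.factorial N : ℝ))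
      ≤ (r * Real.exp (1 - r)) ^ N := by
    have hxN : x ^ N = (N:ℝ) ^ N * r ^ N := by rw [hxdef, mul_pow]
    have step : Real.exp (-x) * (x ^ N / (Nat.factorial N : ℝ))
        ≤ Real.exp (-x) * ((Real.exp N) * r ^ N) := by
      apply mul_le_mul_of_nonneg_left _ (Real.exp_nonneg _)
      rw [hxN, mul_comm ((N:ℝ)^N) (r ^ N), mul_div_assoc]
      exact (mul_le_mul_of_nonneg_left hfacN (pow_nonneg hr0.le N)).trans_eq (mul_comm _ _)
    refine le_trans step (le_of_eq ?_)
    have hpowN : Real.exp (1 - r) ^ N = Real.exp ((N:ℝ) * (1 - r)) := by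
      rw [← Real.exp_nat_mul]
    have harg : -x + (N:ℝ) = (N:ℝ) * (1 - r) := by rw [hxdef]; ring
    calc Real.exp (-x) * (Real.exp (N:ℝ) * r ^ N)
        = Real.exp (-x + (N:ℝ)) * r ^ N := by rw [Real.exp_add]; ring
      _ = (r * Real.exp (1 - r)) ^ N := by rw [harg, mul_pow, hpowN]; ring
  calc Real.exp (-x) * ∑' j : ℕ, x ^ (j + N) / (Nat.factorial (j + N) : ℝ)
      ≤ Real.exp (-x) * ((x ^ N / (Nat.factorial N : ℝ)) * (1 - r)⁻¹) :=
        mul_le_mul_of_nonneg_left htsum_le (Real.exp_nonneg _)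
    _ = (Real.exp (-x) * (x ^ N / (Nat.factorial N : ℝ))) * (1 - r)⁻¹ := by ring
    _ ≤ (r * Real.exp (1 - r)) ^ N * (1 - r)⁻¹ :=
        mul_le_mul_of_nonneg_right hexpx (inv_nonneg.mpr (by linarith))
    _ = (r * Real.exp (1 - r)) ^ N / (1 - r) := by rw [div_eq_mul_inv]


lemma fmono : StrictMonoOn (fun r : ℝ => r * Real.exp (1 - r)) (Icc 0 1) := by
  have hderiv : ∀ s : ℝ, HasDerivAt (fun r : ℝ => r * Real.exp (1 - r))
      ((1 - s) * Real.exp (1 - s)) s := by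
    intro s
    have h1 : HasDerivAt (fun r : ℝ => 1 - r) (-1) s := by
      simpa using (hasDerivAt_id s).const_sub 1
    have h2 : HasDerivAt (fun r : ℝ => Real.exp (1 - r)) (Real.exp (1 - s) * (-1)) s := h1.exp
    have := (hasDerivAt_id s).fun_mul h2
    refine this.congr_deriv ?_
    simp
    ring
  apply strictMonoOn_of_deriv_pos (convex_Icc 0 1)
  · exact (Continuous.continuousOn (by continuity))
  · intro s hs
    rw [interior_Icc] at hs
    rw [(hderiv s).deriv]
    have : 0 < 1 - s := by linarith [hs.2]
    positivity

lemma q_lt_one {ρ : ℝ} (h0 : 0 ≤ ρ) (h1 : ρ < 1) : ρ * Real.exp (1 - ρ) < 1 := by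
  have := fmono (Set.mem_Icc.mpr ⟨h0, h1.le⟩) (Set.mem_Icc.mpr ⟨zero_le_one, le_refl 1⟩) h1
  simpa using this

lemma fmono_le {r ρ : ℝ} (h0 : 0 ≤ r) (hrρ : r ≤ ρ) (h1 : ρ ≤ 1) :
    r * Real.exp (1 - r) ≤ ρ * Real.exp (1 - ρ) :=
  fmono.monotoneOn (Set.mem_Icc.mpr ⟨h0, hrρ.trans h1⟩)
    (Set.mem_Icc.mpr ⟨h0.trans hrρ, h1⟩) hrρ

lemma cube_le_exp {x : ℝ} (hx : 0 ≤ x) : x ^ 3 / 6 ≤ Real.exp x := by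
  have h := Real.sum_le_exp_of_nonneg hx 4
  have h2 : x ^ 3 / 6 ≤ ∑ i ∈ Finset.range 4, x ^ i / (Nat.factorial i : ℝ) := by
    rw [Finset.sum_range_succ, Finset.sum_range_succ, Finset.sum_range_succ,
      Finset.sum_range_one]
    norm_num
    nlinarith [pow_nonneg hx 2, sq_nonneg x]
  linarith

lemma Nsq_pow {q : ℝ} (hq0 : 0 < q) (hq1 : q < 1) {N : ℕ} (hN : 1 ≤ N) :
    (N : ℝ) ^ 2 * q ^ N ≤ 6 / (-Real.log q) ^ 3 / N := by
  set c : ℝ := -Real.log q with hc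
  have hcpos : 0 < c := by
    rw [hc]
    simpa using Real.log_neg hq0 hq1
  have hNpos : (0:ℝ) < N := by exact_mod_cast hN
  have hqN : q ^ N = Real.exp (-(c * N)) := by
    rw [show q = Real.exp (Real.log q) from (Real.exp_log hq0).symm, ← Real.exp_nat_mul]
    congr 1
    rw [hc]
    ring
  have hcube : (c * N) ^ 3 / 6 ≤ Real.exp (c * N) := cube_le_exp (by positivity)
  have hexp_pos : (0:ℝ) < Real.exp (c * N) := Real.exp_pos _
  have h1 : Real.exp (-(c * N)) ≤ 6 / (c * N) ^ 3 := by
    rw [Real.exp_neg, inv_le_comm₀ hexp_pos (by positivity)]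
    calc ((6:ℝ) / (c * N) ^ 3)⁻¹ = (c * N) ^ 3 / 6 := by
          rw [inv_div]
      _ ≤ Real.exp (c * N) := hcube
  calc (N : ℝ) ^ 2 * q ^ N ≤ (N:ℝ) ^ 2 * (6 / (c * N) ^ 3) := by
        rw [hqN]; exact mul_le_mul_of_nonneg_left h1 (by positivity)
    _ = 6 / c ^ 3 / N := by field_simp

lemma sN_real (N : ℕ) (x : ℝ) : sN N (x : ℂ) = ((sr N x : ℝ) : ℂ) := by
  rw [sN, sr]
  push_cast
  rfl

lemma SN_diag (N : ℕ) (Z : ℂ) :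
    SN N Z Z = ((2 * Z.im * Real.exp (2 * Z.im ^ 2) * erfc (Real.sqrt 2 * Z.im)
      / Real.sqrt (2 * Real.pi) * sr N (Complex.normSq Z) : ℝ) : ℂ) := by
  rw [SN]
  have h1 : Z - (starRingEnd ℂ) Z = (2 * Z.im : ℝ) * Complex.I := Complex.sub_conj Z
  have h2 : (starRingEnd ℂ) Z - Z = -((2 * Z.im : ℝ) * Complex.I) := by
    rw [← h1]; ring
  have h3 : Z * (starRingEnd ℂ) Z = ((Complex.normSq Z : ℝ) : ℂ) := Complex.mul_conj Z
  have h4 : Gker Z Z = erfc (Real.sqrt 2 * Z.im) := by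
    rw [Gker]; exact Real.sqrt_mul_self (erfc_nonneg _)
  have h5 : -(1 / 2 : ℂ) * (Z - (starRingEnd ℂ) Z) ^ 2 = ((2 * Z.im ^ 2 : ℝ) : ℂ) := by
    rw [h1]
    rw [mul_pow, Complex.I_sq]
    push_cast
    ring
  rw [h5, h2, h3, h4, sN_real, ← Complex.ofReal_exp]
  push_cast
  linear_combination (-(2 * (Z.im : ℂ) * Complex.exp (2 * (Z.im : ℂ) ^ 2)
    / ((Real.sqrt (2 * Real.pi) : ℝ) : ℂ) * ((erfc (Real.sqrt 2 * Z.im) : ℝ) : ℂ)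
    * ((sr N (Complex.normSq Z) : ℝ) : ℂ))) * Complex.I_sq

lemma isOpen_uhd : IsOpen upperHalfDisk := by
  have : upperHalfDisk = ((fun z : ℂ => ‖z‖) ⁻¹' Iio 1) ∩ (Complex.im ⁻¹' Ioi 0) := rfl
  rw [this]
  exact (isOpen_Iio.preimage continuous_norm).inter
    (isOpen_Ioi.preimage Complex.continuous_im)

lemma seq_tendsto : Tendsto (fun n : ℕ => ((n : ℝ) + 1)⁻¹) atTop (𝓝 0) :=
  tendsto_one_div_add_atTop_nhds_zero_nat.congr (by intro n; rw [one_div])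

lemma mem_frontier_real {x : ℝ} (hx : |x| < 1) : ((x : ℝ) : ℂ) ∈ frontier upperHalfDisk := by
  rw [isOpen_uhd.frontier_eq, Set.mem_diff]
  constructor
  · refine mem_closure_of_tendsto (f := fun n : ℕ => (x : ℂ) + ((((n:ℝ)+1)⁻¹ : ℝ) : ℂ) * Complex.I)
      (b := atTop) ?_ ?_
    · have h0 : Tendsto (fun n : ℕ => ((((n:ℝ)+1)⁻¹ : ℝ) : ℂ)) atTop (𝓝 (0:ℂ)) :=
        (Complex.continuous_ofReal.tendsto 0).comp seq_tendsto
      have := (h0.mul_const Complex.I).const_add (x : ℂ)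
      simpa using this
    · filter_upwards [seq_tendsto.eventually_lt_const (show (0:ℝ) < 1 - |x| by linarith)] with n hn
      set ε : ℝ := ((n:ℝ)+1)⁻¹ with hε
      have hpos : (0:ℝ) < ε := by positivity
      constructor
      · calc ‖(x:ℂ) + (ε : ℂ) * Complex.I‖
            ≤ ‖(x:ℂ)‖ + ‖(ε : ℂ) * Complex.I‖ :=
              norm_add_le _ _
          _ = |x| + ε := by
              rw [norm_mul, Complex.norm_I, Complex.norm_real, Complex.norm_real, Real.norm_eq_abs,
                Real.norm_eq_abs, abs_of_pos hpos, mul_one]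
          _ < 1 := by linarith
      · show 0 < ((x:ℂ) + (ε : ℂ) * Complex.I).im
        simpa using hpos
  · intro h
    exact lt_irrefl (0:ℝ) (by simpa using h.2)

lemma mem_frontier_arc {z : ℂ} (h0 : 0 < z.im) :
    z / ((‖z‖ : ℝ) : ℂ) ∈ frontier upperHalfDisk := by
  have hz0 : z ≠ 0 := fun h => by simp [h] at h0
  have habs : (0:ℝ) < ‖z‖ := norm_pos_iff.mpr hz0
  set w : ℂ := z / ((‖z‖ : ℝ) : ℂ) with hw
  have habsw : ‖w‖ = 1 := by
    rw [hw, norm_div, Complex.norm_real, norm_norm, div_self habs.ne']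
  have himw : 0 < w.im := by
    rw [hw, Complex.div_ofReal_im]
    positivity
  rw [isOpen_uhd.frontier_eq, Set.mem_diff]
  constructor
  · refine mem_closure_of_tendsto (f := fun n : ℕ => ((1 - ((n:ℝ)+1)⁻¹ : ℝ) : ℂ) * w)
      (b := atTop) ?_ ?_
    · have h0' : Tendsto (fun n : ℕ => ((1 - ((n:ℝ)+1)⁻¹ : ℝ) : ℂ)) atTop (𝓝 (1:ℂ)) := by
        have hr : Tendsto (fun n : ℕ => (1 - ((n:ℝ)+1)⁻¹ : ℝ)) atTop (𝓝 1) := by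
          simpa using seq_tendsto.const_sub 1
        exact (Complex.continuous_ofReal.tendsto 1).comp hr
      have := h0'.mul_const w
      simpa using this
    · filter_upwards [seq_tendsto.eventually_lt_const (show (0:ℝ) < 1 by norm_num)] with n hn
      set ε : ℝ := ((n:ℝ)+1)⁻¹ with hε
      have hpos : (0:ℝ) < ε := by positivity
      have h1 : 0 < 1 - ε := by linarith
      constructor
      · show ‖_‖ < 1
        rw [norm_mul, Complex.norm_real, Real.norm_eq_abs, abs_of_pos h1, habsw, mul_one]
        linarith
      · show 0 < (((1 - ε : ℝ) : ℂ) * w).im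
        rw [show (((1 - ε : ℝ) : ℂ) * w).im = (1 - ε) * w.im by
          simp [Complex.mul_im]]
        positivity
  · intro h
    exact lt_irrefl (1:ℝ) (by simpa [habsw] using h.1)


variable {A : Set ℂ}

def dSet (A : Set ℂ) : Set ℝ :=
  {r : ℝ | ∃ z ∈ A, ∃ w ∈ frontier upperHalfDisk, r = dist z w}

lemma dSet_bddBelow : BddBelow (dSet A) :=
  ⟨0, fun r ⟨z, _, w, _, hr⟩ => hr ▸ dist_nonneg⟩

lemma mem_uhd_of_mem (hadm : IsAdmissible A) {z : ℂ} (hz : z ∈ A) :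
    ‖z‖ < 1 ∧ 0 < z.im := hadm (subset_closure hz)

lemma dA_le_im (hadm : IsAdmissible A) {z : ℂ} (hz : z ∈ A) : dA A ≤ z.im := by
  obtain ⟨habs, him⟩ := mem_uhd_of_mem hadm hz
  have hre : |z.re| < 1 := lt_of_le_of_lt (Complex.abs_re_le_norm z) habs
  have hmem : dist z ((z.re : ℝ) : ℂ) ∈ dSet A :=
    ⟨z, hz, _, mem_frontier_real hre, rfl⟩
  have hdist : dist z ((z.re : ℝ) : ℂ) = z.im := by
    rw [Complex.dist_eq]
    have : z - (z.re : ℂ) = (z.im : ℝ) * Complex.I := by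
      apply Complex.ext <;> simp
    rw [this, norm_mul, Complex.norm_I, Complex.norm_real, Real.norm_eq_abs, abs_of_pos him, mul_one]
  have := csInf_le dSet_bddBelow hmem
  rw [hdist] at this
  exact this

lemma dA_le_one_sub_abs (hadm : IsAdmissible A) {z : ℂ} (hz : z ∈ A) :
    ‖z‖ ≤ 1 - dA A := by
  obtain ⟨habs, him⟩ := mem_uhd_of_mem hadm hz
  have hz0 : z ≠ 0 := fun h => by simp [h] at him
  have habs0 : (0:ℝ) < ‖z‖ := norm_pos_iff.mpr hz0
  have hmem : dist z (z / ((‖z‖ : ℝ) : ℂ)) ∈ dSet A :=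
    ⟨z, hz, _, mem_frontier_arc him, rfl⟩
  have hdist : dist z (z / ((‖z‖ : ℝ) : ℂ)) = 1 - ‖z‖ := by
    rw [Complex.dist_eq]
    have hne : ((‖z‖ : ℝ) : ℂ) ≠ 0 := by
      simpa using habs0.ne'
    have : z - z / ((‖z‖ : ℝ) : ℂ)
        = z * (((‖z‖ - 1 : ℝ) : ℂ) / ((‖z‖ : ℝ) : ℂ)) := by
      field_simp
      push_cast
      ring
    rw [this, norm_mul, norm_div, Complex.norm_real, Complex.norm_real, Real.norm_eq_abs,
      Real.norm_eq_abs, abs_of_pos habs0,      abs_of_neg (by linarith : ‖z‖ - 1 < 0)]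
    field_simp
    ring
  have := csInf_le dSet_bddBelow hmem
  rw [hdist] at this
  have hdA : dA A = sInf (dSet A) := rfl
  rw [hdA]
  linarith

lemma dA_pos (hdom : IsPlaneDomain A) (hadm : IsAdmissible A) : 0 < dA A := by
  obtain ⟨z₀, hz₀⟩ := hdom.2.nonempty
  have hbdd : Bornology.IsBounded A := by
    apply Bornology.IsBounded.subset (isBounded_ball (x := (0:ℂ)) (r := 1))
    intro z hz
    rw [mem_ball, Complex.dist_eq, sub_zero]
    exact (mem_uhd_of_mem hadm hz).1
  have hcpt : IsCompact (closure A) := Metric.isCompact_of_isClosed_isBounded isClosed_closure hbdd.closure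
  obtain ⟨δ, hδ, hthick⟩ := hcpt.exists_thickening_subset_open isOpen_uhd hadm
  apply lt_of_lt_of_le hδ
  apply le_csInf
  · obtain ⟨habs, him⟩ := mem_uhd_of_mem hadm hz₀
    have hre : |z₀.re| < 1 := lt_of_le_of_lt (Complex.abs_re_le_norm z₀) habs
    exact ⟨_, ⟨z₀, hz₀, _, mem_frontier_real hre, rfl⟩⟩
  · rintro r ⟨z, hzA, w, hw, rfl⟩
    by_contra h
    push_neg at h
    have hwin : w ∈ Metric.thickening δ (closure A) := by
      rw [Metric.mem_thickening_iff]
      exact ⟨z, subset_closure hzA, by rwa [dist_comm]⟩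
    have : w ∈ upperHalfDisk := hthick hwin
    rw [isOpen_uhd.frontier_eq] at hw
    exact hw.2 this

/-- the diagonal density -/
def gN (N : ℕ) (z : ℂ) : ℝ :=
  2 * (Real.sqrt N * z.im) * Real.exp (2 * (Real.sqrt N * z.im) ^ 2)
    * erfc (Real.sqrt 2 * (Real.sqrt N * z.im)) / Real.sqrt (2 * Real.pi)
    * sr N ((N : ℝ) * Complex.normSq z)

/-- the constant in the pointwise estimate -/
def Pconst (d : ℝ) : ℝ :=
  3 / (16 * Real.pi * d ^ 4)
    + 6 / (Real.pi * (-Real.log ((1 - d) ^ 2 * Real.exp (1 - (1 - d) ^ 2))) ^ 3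
        * (1 - (1 - d) ^ 2))

lemma gN_eq_Efun (N : ℕ) (z : ℂ) :
    gN N z = Efun (Real.sqrt 2 * (Real.sqrt N * z.im))
      * sr N ((N : ℝ) * Complex.normSq z) / Real.pi := by
  rw [gN, Efun]
  set Y : ℝ := Real.sqrt N * z.im
  have h2 : Real.sqrt (2 * Real.pi) = Real.sqrt 2 * Real.sqrt Real.pi :=
    Real.sqrt_mul (by norm_num) _
  have ht2 : (Real.sqrt 2 * Y) ^ 2 = 2 * Y ^ 2 := by
    rw [mul_pow, Real.sq_sqrt (by norm_num : (0:ℝ) ≤ 2)]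
  have h22 : Real.sqrt 2 * Real.sqrt 2 = 2 := Real.mul_self_sqrt (by norm_num)
  have hππ : Real.sqrt Real.pi * Real.sqrt Real.pi = Real.pi :=
    Real.mul_self_sqrt Real.pi_pos.le
  rw [ht2, h2]
  generalize erfc (Real.sqrt 2 * Y) = E
  generalize sr N ((N:ℝ) * Complex.normSq z) = S
  have hs2 : Real.sqrt 2 > 0 := Real.sqrt_pos.mpr (by norm_num)
  have hsπ : Real.sqrt Real.pi > 0 := Real.sqrt_pos.mpr Real.pi_pos
  field_simp
  linear_combination (-2 * (Real.sqrt N * z.im * E * S)) * hππ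
    - (Real.sqrt N * z.im * E * S) * (Real.sqrt Real.pi * Real.sqrt Real.pi) * h22

lemma pointwise {d : ℝ} (hd : 0 < d) (hd2 : d ≤ 1 / 2) {N : ℕ} (hN : 1 ≤ N) {z : ℂ}
    (hy : d ≤ z.im) (hz : ‖z‖ ≤ 1 - d) :
    |(N : ℝ) * gN N z - N / Real.pi + 1 / (4 * Real.pi) * (z.im ^ 2)⁻¹|
      ≤ Pconst d / N := by
  have hNpos : (0:ℝ) < N := by exact_mod_cast hN
  have hy0 : 0 < z.im := lt_of_lt_of_le hd hy
  have hz0 : z ≠ 0 := fun h => by simp [h] at hy0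
  set y : ℝ := z.im with hydef
  set t : ℝ := Real.sqrt 2 * (Real.sqrt N * y) with htdef
  have hsN : (0:ℝ) < Real.sqrt N := Real.sqrt_pos.mpr hNpos
  have ht0 : 0 < t := by positivity
  have ht2 : t ^ 2 = 2 * N * y ^ 2 := by
    rw [htdef, mul_pow, mul_pow, Real.sq_sqrt (by norm_num : (0:ℝ) ≤ 2),
      Real.sq_sqrt hNpos.le]
    ring
  set r : ℝ := Complex.normSq z with hrdef
  have hr0 : 0 < r := Complex.normSq_pos.mpr hz0
  set ρ : ℝ := (1 - d) ^ 2 with hρdef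
  have hρ0 : 0 < ρ := by nlinarith
  have hρ1 : ρ < 1 := by nlinarith
  have hrρ : r ≤ ρ := by
    rw [hrdef, hρdef, ← Complex.sq_norm]
    apply pow_le_pow_left₀ (norm_nonneg z) hz
  have hr1 : r < 1 := lt_of_le_of_lt hrρ hρ1
  set s : ℝ := sr N ((N : ℝ) * r) with hsdef
  have hs0 : 0 ≤ s := sr_nonneg N (by positivity)
  have hs1 : s ≤ 1 := sr_le_one N (by positivity)
  set q : ℝ := ρ * Real.exp (1 - ρ) with hqdef
  have hq0 : 0 < q := by positivity
  have hq1 : q < 1 := q_lt_one hρ0.le hρ1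
  set c : ℝ := -Real.log q with hcdef
  have hc0 : 0 < c := by rw [hcdef]; simpa using Real.log_neg hq0 hq1
  -- key decomposition
  have hmain : (N : ℝ) * gN N z - N / Real.pi + 1 / (4 * Real.pi) * (y ^ 2)⁻¹
      = (N / Real.pi) * ((Efun t * s - 1 + 1 / (2 * t ^ 2))) := by
    rw [gN_eq_Efun]
    show (N:ℝ) * (Efun t * s / Real.pi) - N / Real.pi + 1 / (4 * Real.pi) * (y ^ 2)⁻¹ = _
    rw [show (1:ℝ) / (2 * t ^ 2) = 1 / (2 * (2 * N * y ^ 2)) by rw [ht2]]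
    field_simp
    ring
  rw [hmain]
  have hdecomp : |Efun t * s - 1 + 1 / (2 * t ^ 2)|
      ≤ (3 / 4) / t ^ 4 + (1 - s) := by
    have h1 : Efun t * s - 1 + 1 / (2 * t ^ 2)
        = (Efun t - 1 + 1 / (2 * t ^ 2)) - Efun t * (1 - s) := by ring
    rw [h1]
    calc |(Efun t - 1 + 1 / (2 * t ^ 2)) - Efun t * (1 - s)|
        ≤ |Efun t - 1 + 1 / (2 * t ^ 2)| + |Efun t * (1 - s)| := abs_sub _ _
      _ ≤ (3 / 4) / t ^ 4 + (1 - s) := by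
          apply add_le_add (Efun_expansion ht0)
          rw [abs_mul, abs_of_nonneg (Efun_nonneg ht0.le),
            abs_of_nonneg (by linarith : (0:ℝ) ≤ 1 - s)]
          calc Efun t * (1 - s) ≤ 1 * (1 - s) :=
                mul_le_mul_of_nonneg_right (Efun_le_one ht0) (by linarith)
            _ = 1 - s := one_mul _
  have htail : 1 - s ≤ q ^ N / (1 - ρ) := by
    calc 1 - s ≤ (r * Real.exp (1 - r)) ^ N / (1 - r) := sr_tail hN hr0 hr1
      _ ≤ q ^ N / (1 - ρ) := by
          apply div_le_div₀ (by positivity)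
          · exact pow_le_pow_left₀ (by positivity) (fmono_le hr0.le hrρ hρ1.le) N
          · linarith
          · linarith
  have habs : |(N / Real.pi) * ((Efun t * s - 1 + 1 / (2 * t ^ 2)))|
      = (N / Real.pi) * |Efun t * s - 1 + 1 / (2 * t ^ 2)| := by
    rw [abs_mul, abs_of_nonneg (by positivity : (0:ℝ) ≤ (N:ℝ) / Real.pi)]
  rw [habs]
  have hbound1 : (N / Real.pi) * ((3 / 4) / t ^ 4) ≤ 3 / (16 * Real.pi * d ^ 4) / N := by
    have ht4 : t ^ 4 = 4 * N ^ 2 * y ^ 4 := by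
      rw [show t ^ 4 = (t ^ 2) ^ 2 by ring, ht2]; ring
    rw [ht4, le_div_iff₀ hNpos]
    have hy4 : d ^ 4 ≤ y ^ 4 := pow_le_pow_left₀ hd.le hy 4
    have hπ : (0:ℝ) < Real.pi := Real.pi_pos
    calc (N:ℝ) / Real.pi * (3 / 4 / (4 * ↑N ^ 2 * y ^ 4)) * ↑N
        = 3 / (16 * Real.pi * y ^ 4) := by field_simp; ring
      _ ≤ 3 / (16 * Real.pi * d ^ 4) := by
          apply div_le_div_of_nonneg_left (by norm_num) (by positivity)
          gcongr
  have hbound2 : (N / Real.pi) * (q ^ N / (1 - ρ))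
      ≤ 6 / (Real.pi * c ^ 3 * (1 - ρ)) / N := by
    have hNq := Nsq_pow hq0 hq1 hN
    have h1ρ : (0:ℝ) < 1 - ρ := by linarith
    have hπ : (0:ℝ) < Real.pi := Real.pi_pos
    rw [le_div_iff₀ hNpos]
    calc (N:ℝ) / Real.pi * (q ^ N / (1 - ρ)) * N = (N ^ 2 * q ^ N) / (Real.pi * (1 - ρ)) := by
          field_simp
      _ ≤ (6 / c ^ 3 / N) / (Real.pi * (1 - ρ)) := by
          rw [div_le_div_iff_of_pos_right (mul_pos hπ h1ρ)]
          exact hNq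
      _ ≤ 6 / (Real.pi * c ^ 3 * (1 - ρ)) := by
          rw [div_le_div_iff₀ (by positivity) (by positivity)]
          have : (1:ℝ) ≤ N := by exact_mod_cast hN
          calc 6 / c ^ 3 / ↑N * (Real.pi * c ^ 3 * (1 - ρ))
              = (6 * Real.pi * (1 - ρ)) / N := by field_simp
            _ ≤ 6 * Real.pi * (1 - ρ) := by
                rw [div_le_iff₀ hNpos]
                nlinarith [mul_pos hπ h1ρ]
            _ = 6 * (Real.pi * (1 - ρ)) := by ring
  calc (N / Real.pi) * |Efun t * s - 1 + 1 / (2 * t ^ 2)|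
      ≤ (N / Real.pi) * ((3 / 4) / t ^ 4 + (1 - s)) :=
        mul_le_mul_of_nonneg_left hdecomp (by positivity)
    _ ≤ (N / Real.pi) * ((3 / 4) / t ^ 4) + (N / Real.pi) * (q ^ N / (1 - ρ)) := by
        rw [mul_add]
        exact add_le_add (le_refl _) (mul_le_mul_of_nonneg_left htail (by positivity))
    _ ≤ 3 / (16 * Real.pi * d ^ 4) / N + 6 / (Real.pi * c ^ 3 * (1 - ρ)) / N :=
        add_le_add hbound1 hbound2
    _ = Pconst d / N := by
        rw [Pconst, add_div]

lemma SN_diag' (N : ℕ) (z : ℂ) :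
    SN N ((Real.sqrt N : ℂ) * z) ((Real.sqrt N : ℂ) * z) = ((gN N z : ℝ) : ℂ) := by
  have him : ((Real.sqrt N : ℂ) * z).im = Real.sqrt N * z.im := by
    simp [Complex.mul_im]
  have hns : Complex.normSq ((Real.sqrt N : ℂ) * z) = (N : ℝ) * Complex.normSq z := by
    rw [Complex.normSq_mul, Complex.normSq_ofReal, Real.mul_self_sqrt (Nat.cast_nonneg N)]
  rw [SN_diag, him, hns, gN]

lemma gN_measurable (N : ℕ) : Measurable (gN N) := by
  have hsr : Continuous (sr N) := by
    unfold sr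
    fun_prop
  have m1 : Measurable fun z : ℂ =>
      2 * (Real.sqrt N * z.im) * Real.exp (2 * (Real.sqrt N * z.im) ^ 2) := by fun_prop
  have m2 : Measurable fun z : ℂ => erfc (Real.sqrt 2 * (Real.sqrt N * z.im)) :=
    erfc_measurable.comp (by fun_prop)
  have m3 : Measurable fun z : ℂ => sr N ((N : ℝ) * Complex.normSq z) :=
    hsr.measurable.comp (Complex.continuous_normSq.measurable.const_mul ((N : ℝ)))
  exact (((m1.mul m2).div_const _).mul m3)


end Stmt11Aux

open Stmt11Aux in
/-- First-order term of the variance: for an admissible domain `A`,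
`N ∫_A S_N(√N z, √N z) dz = (N/π) area(A) - (1/(4π)) ∫_A Im(z)^{-2} dz + O(1/N)`,
with a constant depending only on `d_A`. -/
theorem statement_11 :
    ∃ C : ℝ → ℝ, ∀ A : Set ℂ, IsPlaneDomain A → IsAdmissible A →
      0 < C (dA A) ∧
        ∀ N : ℕ, 1 ≤ N →
          norm
              ((N : ℂ) * (∫ z in A, SN N ((Real.sqrt N : ℂ) * z) ((Real.sqrt N : ℂ) * z)) -
                (((N : ℝ) / Real.pi * (volume A).toReal : ℝ) : ℂ) +
                ((1 / (4 * Real.pi) * ∫ z in A, (z.im ^ 2)⁻¹ : ℝ) : ℂ)) ≤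
            C (dA A) / N := by
  use fun d => Real.pi * Pconst d + 1
  intro A hdom hadm
  set d : ℝ := dA A with hddef
  have hd : 0 < d := dA_pos hdom hadm
  obtain ⟨z₀, hz₀⟩ := hdom.2.nonempty
  have hd2 : d ≤ 1 / 2 := by
    have h1 := dA_le_im hadm hz₀
    have h2 := dA_le_one_sub_abs hadm hz₀
    have h3 : z₀.im ≤ ‖z₀‖ := le_trans (le_abs_self _) (Complex.abs_im_le_norm z₀)
    linarith
  have hρ0 : 0 < (1 - d) ^ 2 := by nlinarith
  have hρ1 : (1 - d) ^ 2 < 1 := by nlinarith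
  have hq0 : 0 < (1 - d) ^ 2 * Real.exp (1 - (1 - d) ^ 2) := by positivity
  have hq1 : (1 - d) ^ 2 * Real.exp (1 - (1 - d) ^ 2) < 1 := q_lt_one hρ0.le hρ1
  have hc0 : 0 < -Real.log ((1 - d) ^ 2 * Real.exp (1 - (1 - d) ^ 2)) := by
    simpa using Real.log_neg hq0 hq1
  have hP0 : 0 < Pconst d := by
    rw [Pconst]
    have h1ρ : (0:ℝ) < 1 - (1 - d) ^ 2 := by linarith
    positivity
  have hπ := Real.pi_pos
  constructor
  · positivity
  intro N hN
  have hNpos : (0:ℝ) < N := by exact_mod_cast hN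
  -- basic set facts
  have hmeasA : MeasurableSet A := hdom.1.measurableSet
  have hsub : A ⊆ Metric.ball (0:ℂ) 1 := by
    intro z hz
    have := (mem_uhd_of_mem hadm hz).1
    simpa [Metric.mem_ball, Complex.dist_eq] using this
  have hball : volume (Metric.ball (0:ℂ) 1) = (NNReal.pi : ENNReal) := by
    rw [Complex.volume_ball]; simp
  have hvol_lt : volume A < ⊤ := by
    apply lt_of_le_of_lt (measure_mono hsub)
    rw [hball]
    exact ENNReal.coe_lt_top
  have hvol_le : (volume A).toReal ≤ Real.pi := by
    calc (volume A).toReal ≤ (volume (Metric.ball (0:ℂ) 1)).toReal := by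
          apply ENNReal.toReal_mono _ (measure_mono hsub)
          rw [hball]; exact ENNReal.coe_ne_top
      _ = Real.pi := by rw [hball, ENNReal.coe_toReal, NNReal.coe_real_pi]
  -- integrability
  have hbd : ∀ z ∈ A, |gN N z| ≤ 1 / Real.pi := by
    intro z hz
    obtain ⟨habs, him⟩ := mem_uhd_of_mem hadm hz
    have ht0 : 0 < Real.sqrt 2 * (Real.sqrt N * z.im) := by
      have : (0:ℝ) < Real.sqrt N := Real.sqrt_pos.mpr hNpos
      have h2 : (0:ℝ) < Real.sqrt 2 := Real.sqrt_pos.mpr (by norm_num)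
      positivity
    have hx0 : (0:ℝ) ≤ (N:ℝ) * Complex.normSq z :=
      mul_nonneg (Nat.cast_nonneg N) (Complex.normSq_nonneg z)
    rw [gN_eq_Efun, abs_div, abs_of_pos hπ, abs_mul,
      abs_of_nonneg (Efun_nonneg ht0.le), abs_of_nonneg (sr_nonneg N hx0)]
    rw [div_le_div_iff_of_pos_right hπ]
    calc Efun (Real.sqrt 2 * (Real.sqrt N * z.im)) * sr N ((N:ℝ) * Complex.normSq z)
        ≤ 1 * 1 := mul_le_mul (Efun_le_one ht0) (sr_le_one N hx0) (sr_nonneg N hx0) zero_le_one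
      _ = 1 := one_mul 1
  have hint_g : IntegrableOn (gN N) A := by
    apply Measure.integrableOn_of_bounded hvol_lt.ne
      (gN_measurable N).aestronglyMeasurable
    rw [ae_restrict_iff' hmeasA]
    exact Filter.Eventually.of_forall fun z hz => by
      rw [Real.norm_eq_abs]; exact hbd z hz
  have hint_inv : IntegrableOn (fun z : ℂ => (z.im ^ 2)⁻¹) A := by
    apply Measure.integrableOn_of_bounded (M := (d ^ 2)⁻¹) hvol_lt.ne
      ((Complex.measurable_im.pow_const 2).inv.aestronglyMeasurable)
    rw [ae_restrict_iff' hmeasA]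
    apply Filter.Eventually.of_forall
    intro z hz
    have him : d ≤ z.im := dA_le_im hadm hz
    have h0 : 0 < z.im := lt_of_lt_of_le hd him
    rw [Real.norm_eq_abs, abs_of_nonneg (inv_nonneg.mpr (sq_nonneg _))]
    exact inv_anti₀ (by positivity) (by nlinarith [him, hd])
  -- reduce to a real integral
  have hreal : (N : ℂ) * (∫ z in A, SN N ((Real.sqrt N : ℂ) * z) ((Real.sqrt N : ℂ) * z)) -
                (((N : ℝ) / Real.pi * (volume A).toReal : ℝ) : ℂ) +
                ((1 / (4 * Real.pi) * ∫ z in A, (z.im ^ 2)⁻¹ : ℝ) : ℂ)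
      = ((((N:ℝ) * ∫ z in A, gN N z) - ((N : ℝ) / Real.pi * (volume A).toReal)
          + (1 / (4 * Real.pi) * ∫ z in A, (z.im ^ 2)⁻¹) : ℝ) : ℂ) := by
    have h0 : (∫ z in A, SN N ((Real.sqrt N : ℂ) * z) ((Real.sqrt N : ℂ) * z))
        = ∫ z in A, ((gN N z : ℝ) : ℂ) :=
      setIntegral_congr_fun hmeasA fun z _ => SN_diag' N z
    have h1 : ∫ z in A, ((gN N z : ℝ) : ℂ) = ((∫ z in A, gN N z : ℝ) : ℂ) := integral_ofReal
    rw [h0, h1]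
    push_cast
    ring
  rw [hreal, Complex.norm_real, Real.norm_eq_abs]
  -- rewrite as a single integral
  have hconst : IntegrableOn (fun _ : ℂ => (N:ℝ) / Real.pi) A :=
    integrableOn_const hvol_lt.ne
  have h1 : IntegrableOn (fun z : ℂ => (N:ℝ) * gN N z - (N:ℝ) / Real.pi) A :=
    (hint_g.const_mul ((N:ℝ))).sub hconst
  have h2 : IntegrableOn (fun z : ℂ => 1 / (4 * Real.pi) * (z.im ^ 2)⁻¹) A :=
    hint_inv.const_mul _
  have hsum : ∫ z in A, (((N:ℝ) * gN N z - (N:ℝ) / Real.pi)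
        + 1 / (4 * Real.pi) * (z.im ^ 2)⁻¹)
      = (∫ z in A, ((N:ℝ) * gN N z - (N:ℝ) / Real.pi))
        + ∫ z in A, 1 / (4 * Real.pi) * (z.im ^ 2)⁻¹ := integral_add h1 h2
  have hsub : ∫ z in A, ((N:ℝ) * gN N z - (N:ℝ) / Real.pi)
      = (∫ z in A, (N:ℝ) * gN N z) - ∫ z in A, ((N:ℝ) / Real.pi : ℝ) :=
    integral_sub (hint_g.const_mul ((N:ℝ))) hconst
  have hmul1 : ∫ z in A, (N:ℝ) * gN N z = (N:ℝ) * ∫ z in A, gN N z :=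
    integral_const_mul _ _
  have hmul2 : ∫ z in A, 1 / (4 * Real.pi) * (z.im ^ 2)⁻¹
      = 1 / (4 * Real.pi) * ∫ z in A, (z.im ^ 2)⁻¹ := integral_const_mul _ _
  have hcst : ∫ _ in A, ((N:ℝ) / Real.pi : ℝ) = (volume A).toReal • ((N:ℝ) / Real.pi) :=
    setIntegral_const _
  have hsplit : ((N:ℝ) * ∫ z in A, gN N z) - ((N : ℝ) / Real.pi * (volume A).toReal)
          + (1 / (4 * Real.pi) * ∫ z in A, (z.im ^ 2)⁻¹)
      = ∫ z in A, ((N:ℝ) * gN N z - (N:ℝ) / Real.pi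
          + 1 / (4 * Real.pi) * (z.im ^ 2)⁻¹) := by
    rw [hsum, hsub, hmul1, hmul2, hcst, smul_eq_mul]
    ring
  rw [hsplit]
  have hptwise : ∀ z ∈ A, ‖(N:ℝ) * gN N z - (N:ℝ) / Real.pi
      + 1 / (4 * Real.pi) * (z.im ^ 2)⁻¹‖ ≤ Pconst d / N := by
    intro z hz
    rw [Real.norm_eq_abs]
    exact pointwise hd hd2 hN (dA_le_im hadm hz) (dA_le_one_sub_abs hadm hz)
  calc |∫ z in A, ((N:ℝ) * gN N z - (N:ℝ) / Real.pi + 1 / (4 * Real.pi) * (z.im ^ 2)⁻¹)|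
      ≤ Pconst d / N * (volume A).toReal := by
        rw [← Real.norm_eq_abs]
        exact norm_setIntegral_le_of_norm_le_const hvol_lt hptwise
    _ ≤ Pconst d / N * Real.pi :=
        mul_le_mul_of_nonneg_left hvol_le (by positivity)
    _ ≤ (Real.pi * Pconst d + 1) / N := by
        rw [div_mul_eq_mul_div, div_le_div_iff₀ hNpos hNpos]
        nlinarith [hP0, hπ, hNpos]
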